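/- Let Q be a connected quiver, k a field, θ : V → ℝ generic with Σ_{i∈V} θ_i = 0, and (x, x*) a θ-stable toric representation of the double quiver of Q. Let e ∈ E, suppose the restriction of (x, x*) to E ∖ {e} is not θ-stable, and suppose every destabilising subset contains t(e) (and hence not h(e)). Let β := min{Σ_{i∈J} θ_i : J destabilising} and define θ' by θ'_{t(e)} = θ_{t(e)} − β, θ'_{h(e)} = θ_{h(e)} + β, θ'_i = θ_i otherwise. Then: (i) there is a unique destabilising subset J₁ with Σ_{i∈J₁} θ_i = β; (ii) Σ_{i∈J₁} θ'_i = 0 and every subset J with ∅ ≠ J ⊊ J₁ that is closed for the restriction of (x, x*) to the edges with both endpoints in J₁ satisfies Σ_{i∈J} θ'_i > 0; (iii) every subset J with ∅ ≠ J ⊊ V ∖ J₁ that is closed for the restriction of (x, x*) to the edges with both endpoints in V ∖ J₁ satisfies Σ_{i∈J} θ'_i > 0. -/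

import Mathlib

open Classical Finset

noncomputable section

/-- The equivalence relation on vertices generated by the edges in `D`:
`t e` and `h e` are related for every `e ∈ D`. -/
def joinedRel {V E : Type} (tl hd : E → V) (D : Set E) : V → V → Prop :=
  Relation.EqvGen fun a b => ∃ e ∈ D, (tl e = a ∧ hd e = b) ∨ (tl e = b ∧ hd e = a)

/-- The graph `(V, D)` is connected. -/
def IsConn {V E : Type} (tl hd : E → V) (D : Set E) : Prop :=
  ∀ a b : V, joinedRel tl hd D a b

/-- `T ⊆ E` is a spanning tree: `(V, T)` is connected and `#T = #V - 1`. -/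
def IsSpanningTree {V E : Type} [Fintype V] (tl hd : E → V) (T : Finset E) : Prop :=
  IsConn tl hd ↑T ∧ T.card + 1 = Fintype.card V

/-- The connected component of the vertex `v` in the graph with edge set `D`. -/
def component {V E : Type} [Fintype V] (tl hd : E → V) (D : Finset E) (v : V) : Finset V :=
  Finset.univ.filter fun j => joinedRel tl hd (↑D) v j

/-- Genericity of a stability parameter. -/
def Generic {V : Type} [Fintype V] (θ : V → ℝ) : Prop :=
  ∀ J : Finset V, J.Nonempty → J ≠ Finset.univ → ∑ i ∈ J, θ i ≠ 0

/-- Auxiliary recursion computing the external activity: `S` is the set of remaining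
edges and `C` the set of already contracted edges (an edge of the current, partially
contracted, quiver is a loop iff its endpoints are joined by edges of `C`).  At each
step the largest non-loop edge is contracted (if it lies in `T`) or deleted (otherwise);
once no non-loop edge remains (i.e. the contracted quiver has one vertex), the number of
remaining (loop) edges is returned. -/
def extactAux {V E : Type} [LinearOrder E] (tl hd : E → V) (T : Finset E)
    (S C : Finset E) : ℕ :=
  if hne : (S.filter fun e => ¬ joinedRel tl hd (↑C) (tl e) (hd e)).Nonempty then
    if (S.filter fun e => ¬ joinedRel tl hd (↑C) (tl e) (hd e)).max' hne ∈ T then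
      extactAux tl hd T
        (S.erase ((S.filter fun e => ¬ joinedRel tl hd (↑C) (tl e) (hd e)).max' hne))
        (insert ((S.filter fun e => ¬ joinedRel tl hd (↑C) (tl e) (hd e)).max' hne) C)
    else
      extactAux tl hd T
        (S.erase ((S.filter fun e => ¬ joinedRel tl hd (↑C) (tl e) (hd e)).max' hne)) C
  else S.card
termination_by S.card
decreasing_by
  · exact Finset.card_lt_card (Finset.erase_ssubset
      (Finset.mem_of_mem_filter _ (Finset.max'_mem _ hne)))
  · exact Finset.card_lt_card (Finset.erase_ssubset
      (Finset.mem_of_mem_filter _ (Finset.max'_mem _ hne)))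

/-- The external activity `extact(Q, T)` of a spanning tree `T`, with respect to a fixed
linear order on the edges. -/
def extact {V E : Type} [Fintype E] [LinearOrder E] (tl hd : E → V) (T : Finset E) : ℕ :=
  extactAux tl hd T Finset.univ ∅

/-- Isomorphism of toric representations. -/
def IsoRep {V E k : Type} [Field k] (tl hd : E → V) (x x' : E → k) : Prop :=
  ∃ g : V → kˣ, ∀ e, x' e = (g (hd e) : k) * x e * ((g (tl e) : k))⁻¹

/-- Gauge equivalence (the `(kˣ)^V`-action) for representations of the double quiver. -/
def GaugeEquiv {V E k : Type} [Field k] (tl hd : E → V) (x xs x' xs' : E → k) : Prop :=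
  ∃ g : V → kˣ,
    (∀ e, x' e = (g (hd e) : k) * x e * ((g (tl e) : k))⁻¹) ∧
    (∀ e, xs' e = (g (tl e) : k) * xs e * ((g (hd e) : k))⁻¹)

/-- The moment map equations for the parameter `lam`. -/
def MomentMap {V E k : Type} [Fintype E] [Field k] (tl hd : E → V) (lam : V → k)
    (x xs : E → k) : Prop :=
  ∀ i : V,
    (∑ e ∈ Finset.univ.filter fun e => hd e = i, x e * xs e) -
      (∑ e ∈ Finset.univ.filter fun e => tl e = i, x e * xs e) = lam i

/-- `J` is closed for `(x, xs)`, with only the conditions for edges in `S` imposed. -/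
def ClosedOn {V E k : Type} [Zero k] (tl hd : E → V) (x xs : E → k) (S : Set E)
    (J : Finset V) : Prop :=
  ∀ e ∈ S, (x e ≠ 0 → tl e ∈ J → hd e ∈ J) ∧ (xs e ≠ 0 → hd e ∈ J → tl e ∈ J)

/-- `θ`-stability of `(x, xs)` on the subquiver with vertex set `W` and edge set `S`. -/
def StableSub {V E k : Type} [Zero k] (tl hd : E → V) (θ : V → ℝ) (x xs : E → k)
    (W : Finset V) (S : Set E) : Prop :=
  ∀ J : Finset V, J ⊆ W → ClosedOn tl hd x xs S J → J.Nonempty → J ≠ W →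
    0 < ∑ i ∈ J, θ i

/-- Destabilising subsets for `(x, xs)` on the subquiver `(W, S)`. -/
def DestabSub {V E k : Type} [Zero k] (tl hd : E → V) (θ : V → ℝ) (x xs : E → k)
    (W : Finset V) (S : Set E) (J : Finset V) : Prop :=
  J ⊆ W ∧ J.Nonempty ∧ J ≠ W ∧ ClosedOn tl hd x xs S J ∧ ∑ i ∈ J, θ i ≤ 0

/-- The projection identifying the vertex `a` with the vertex `b`, i.e. the quotient map
`V → V/e` for the contraction of an edge with tail `a` and head `b` (the quotient being
modelled on the subtype of vertices different from `a`). -/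
def cProj {V : Type} (a b : V) (h : b ≠ a) (i : V) : {j : V // j ≠ a} :=
  if hi : i = a then ⟨b, h⟩ else ⟨i, hi⟩

/-- Tail map of the contracted quiver `Q/e`. -/
def contractTl {V E : Type} (tl hd : E → V) (e : E) (h : hd e ≠ tl e)
    (f : {f : E // f ≠ e}) : {j : V // j ≠ tl e} := cProj (tl e) (hd e) h (tl f.1)

/-- Head map of the contracted quiver `Q/e`. -/
def contractHd {V E : Type} (tl hd : E → V) (e : E) (h : hd e ≠ tl e)
    (f : {f : E // f ≠ e}) : {j : V // j ≠ tl e} := cProj (tl e) (hd e) h (hd f.1)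

/-- Contraction `θ/e` (or `λ/e`) of a parameter along the contraction of an edge with
tail `a` and head `b`: the new vertex `ι` (represented by `b`) gets the value
`θ a + θ b`, all other vertices keep their values. -/
def contractParam {V R : Type} [Add R] (a b : V) (θ : V → R) (j : {i : V // i ≠ a}) : R :=
  if (j : V) = b then θ a + θ b else θ (j : V)

/-- The graph of the tree-assignment recursion: `TreeAssign tl hd x xs W S θ T` means
that the recursion, applied to the restriction of `(x, xs)` to the subquiver with vertex
set `W` and edge set `S` and with stability parameter `θ` (and the linear order induced
from `E`), produces the spanning tree `T`. -/
inductive TreeAssign {V E k : Type} [Fintype V] [LinearOrder E] [Zero k]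
    (tl hd : E → V) (x xs : E → k) :
    Finset V → Finset E → (V → ℝ) → Finset E → Prop
  | base (W : Finset V) (S : Finset E) (θ : V → ℝ) (hW : W.card = 1) :
      TreeAssign tl hd x xs W S θ ∅
  | delete (W : Finset V) (S : Finset E) (θ : V → ℝ) (e : E)
      (he : e ∈ S) (hloop : tl e ≠ hd e)
      (hsmall : ∀ f ∈ S, tl f ≠ hd f → e ≤ f)
      (hstab : StableSub tl hd θ x xs W ↑(S.erase e))
      (T : Finset E) (ih : TreeAssign tl hd x xs W (S.erase e) θ T) :
      TreeAssign tl hd x xs W S θ T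
  | contract (W : Finset V) (S : Finset E) (θ : V → ℝ) (e : E) (a b : V)
      (he : e ∈ S) (hloop : tl e ≠ hd e)
      (hsmall : ∀ f ∈ S, tl f ≠ hd f → e ≤ f)
      (hab : (a = tl e ∧ b = hd e) ∨ (a = hd e ∧ b = tl e))
      (J₁ : Finset V)
      (hJ₁ : DestabSub tl hd θ x xs W ↑(S.erase e) J₁)
      (hall : ∀ J, DestabSub tl hd θ x xs W ↑(S.erase e) J → a ∈ J ∧ b ∉ J)
      (hmin : ∀ J, DestabSub tl hd θ x xs W ↑(S.erase e) J →
        ∑ i ∈ J₁, θ i ≤ ∑ i ∈ J, θ i)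
      (T₁ T₂ : Finset E)
      (ih₁ : TreeAssign tl hd x xs J₁ (S.filter fun f => tl f ∈ J₁ ∧ hd f ∈ J₁)
          (fun i => if i = a then θ i - ∑ j ∈ J₁, θ j
            else if i = b then θ i + ∑ j ∈ J₁, θ j else θ i) T₁)
      (ih₂ : TreeAssign tl hd x xs (W \ J₁)
          (S.filter fun f => tl f ∈ W \ J₁ ∧ hd f ∈ W \ J₁)
          (fun i => if i = a then θ i - ∑ j ∈ J₁, θ j
            else if i = b then θ i + ∑ j ∈ J₁, θ j else θ i) T₂) :
      TreeAssign tl hd x xs W S θ (insert e (T₁ ∪ T₂))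

/-- Points of the cell `M_T`: `θ`-stable pairs satisfying the moment map equations whose
assigned spanning tree is `T`. -/
def CellPt {V E k : Type} [Fintype V] [Fintype E] [LinearOrder E] [Field k]
    (tl hd : E → V) (lam : V → k) (θ : V → ℝ) (T : Finset E) : Type :=
  {p : (E → k) × (E → k) //
    StableSub tl hd θ p.1 p.2 Finset.univ Set.univ ∧
    MomentMap tl hd lam p.1 p.2 ∧
    TreeAssign tl hd p.1 p.2 Finset.univ Finset.univ θ T}

/-- The cell `M_T` of the Nakajima orbit set: `(kˣ)^V`-orbits of points. -/
def Cell {V E k : Type} [Fintype V] [Fintype E] [LinearOrder E] [Field k]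
    (tl hd : E → V) (lam : V → k) (θ : V → ℝ) (T : Finset E) : Type :=
  Quot fun p q : CellPt tl hd lam θ T => GaugeEquiv tl hd p.1.1 p.1.2 q.1.1 q.1.2

/-! Closed sets form a lattice on which `J ↦ Σ_J θ` is modular. Every destabilising set
contains `t(e)` and, by `θ`-stability, avoids `h(e)`; the closed sets with these two
properties form a sublattice, so if `J₁` and `J₂` both attain the minimum `β`, modularity
forces `J₁ ∩ J₂` to attain it as well, and genericity then gives `J₁ = J₂` (each differs from
`J₁ ∩ J₂` by a set of weight `0`). Stability of the pieces for `θ'` comes from the strict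
minimality of `J₁`: a closed `J ⊊ J₁` containing `t(e)` has `Σ_J θ > β`, and a closed
`J ⊆ V ∖ J₁` avoiding `h(e)` with `Σ_J θ < 0` would make `J ∪ J₁` a destabilising set of
weight below `β`. -/

section Closed

variable {V E k : Type} [Zero k] {tl hd : E → V} {x xs : E → k}

theorem ClosedOn.union {S : Set E} {A B : Finset V} (hA : ClosedOn tl hd x xs S A)
    (hB : ClosedOn tl hd x xs S B) : ClosedOn tl hd x xs S (A ∪ B) := by
  intro f hf
  simp only [Finset.mem_union]
  exact ⟨fun hx => Or.imp ((hA f hf).1 hx) ((hB f hf).1 hx),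
    fun hxs => Or.imp ((hA f hf).2 hxs) ((hB f hf).2 hxs)⟩

theorem ClosedOn.inter {S : Set E} {A B : Finset V} (hA : ClosedOn tl hd x xs S A)
    (hB : ClosedOn tl hd x xs S B) : ClosedOn tl hd x xs S (A ∩ B) := by
  intro f hf
  simp only [Finset.mem_inter]
  exact ⟨fun hx => And.imp ((hA f hf).1 hx) ((hB f hf).1 hx),
    fun hxs => And.imp ((hA f hf).2 hxs) ((hB f hf).2 hxs)⟩

theorem ClosedOn.univ_of_mem_iff {e : E} {J : Finset V}
    (hJ : ClosedOn tl hd x xs {f | f ≠ e} J) (he : tl e ∈ J ↔ hd e ∈ J) :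
    ClosedOn tl hd x xs Set.univ J := by
  intro f _
  by_cases hf : f = e
  · subst hf
    exact ⟨fun _ => he.1, fun _ => he.2⟩
  · exact hJ f hf

theorem ClosedOn.of_closedOn_induced {S : Set E} {J₁ J : Finset V}
    (hJ₁ : ClosedOn tl hd x xs S J₁) (hJ : J ⊆ J₁)
    (h : ClosedOn tl hd x xs {f | tl f ∈ J₁ ∧ hd f ∈ J₁} J) :
    ClosedOn tl hd x xs S J := by
  intro f hf
  refine ⟨fun hx ht => ?_, fun hxs hh => ?_⟩
  · exact (h f ⟨hJ ht, (hJ₁ f hf).1 hx (hJ ht)⟩).1 hx ht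
  · exact (h f ⟨(hJ₁ f hf).2 hxs (hJ hh), hJ hh⟩).2 hxs hh

theorem ClosedOn.union_of_closedOn_induced_compl {S : Set E} {J₁ J : Finset V}
    (hJ₁ : ClosedOn tl hd x xs S J₁)
    (h : ClosedOn tl hd x xs {f | tl f ∉ J₁ ∧ hd f ∉ J₁} J) :
    ClosedOn tl hd x xs S (J ∪ J₁) := by
  intro f hf
  simp only [Finset.mem_union]
  refine ⟨fun hx ht => ?_, fun hxs hh => ?_⟩
  · by_cases ht₁ : tl f ∈ J₁
    · exact Or.inr ((hJ₁ f hf).1 hx ht₁)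
    by_cases hh₁ : hd f ∈ J₁
    · exact Or.inr hh₁
    exact Or.inl ((h f ⟨ht₁, hh₁⟩).1 hx (ht.resolve_right ht₁))
  · by_cases hh₁ : hd f ∈ J₁
    · exact Or.inr ((hJ₁ f hf).2 hxs hh₁)
    by_cases ht₁ : tl f ∈ J₁
    · exact Or.inr ht₁
    exact Or.inl ((h f ⟨ht₁, hh₁⟩).2 hxs (hh.resolve_right hh₁))

end Closed

section Shift

variable {V : Type} (θ : V → ℝ)

/-- The paper's `θ'`, for `a = t(e)` and `b = h(e)`. -/
def shiftParam (a b : V) (β : ℝ) (i : V) : ℝ :=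
  if i = a then θ i - β else if i = b then θ i + β else θ i

theorem sum_shiftParam {a b : V} (hab : a ≠ b) (β : ℝ) (J : Finset V) :
    ∑ i ∈ J, shiftParam θ a b β i =
      ∑ i ∈ J, θ i - (if a ∈ J then β else 0) + (if b ∈ J then β else 0) := by
  have hpt : ∀ i, shiftParam θ a b β i =
      θ i - (if i = a then β else 0) + (if i = b then β else 0) := by
    intro i
    unfold shiftParam
    by_cases ha : i = a
    · simp [ha, hab]
    · by_cases hb : i = b <;> simp [ha, hb, hab.symm]
  simp only [hpt, Finset.sum_add_distrib, Finset.sum_sub_distrib, Finset.sum_ite_eq']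

end Shift

section Sums

variable {V : Type} [Fintype V] (θ : V → ℝ)

theorem finite_setOf_sum (P : Finset V → Prop) :
    {s : ℝ | ∃ J, P J ∧ ∑ i ∈ J, θ i = s}.Finite :=
  (Set.finite_range fun J : Finset V => ∑ i ∈ J, θ i).subset <| by
    rintro _ ⟨J, -, rfl⟩
    exact ⟨J, rfl⟩

theorem exists_sum_eq_sInf {P : Finset V → Prop} (h : ∃ J, P J) :
    ∃ J, P J ∧ ∑ i ∈ J, θ i = sInf {s : ℝ | ∃ J, P J ∧ ∑ i ∈ J, θ i = s} := by
  obtain ⟨J, hJ⟩ := h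
  have hne : {s : ℝ | ∃ J, P J ∧ ∑ i ∈ J, θ i = s}.Nonempty := ⟨_, J, hJ, rfl⟩
  exact hne.csInf_mem (finite_setOf_sum θ P)

theorem sInf_le_sum {P : Finset V → Prop} {J : Finset V} (hJ : P J) :
    sInf {s : ℝ | ∃ J, P J ∧ ∑ i ∈ J, θ i = s} ≤ ∑ i ∈ J, θ i :=
  csInf_le (finite_setOf_sum θ P).bddBelow ⟨J, hJ, rfl⟩

theorem Generic.eq_of_sum_eq_min {θ : V → ℝ} (hgen : Generic θ) {C : Finset V → Prop}
    (hunion : ∀ A B, C A → C B → C (A ∪ B)) (hinter : ∀ A B, C A → C B → C (A ∩ B))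
    (hne : ∀ A, C A → A ≠ Finset.univ) {β : ℝ} (hβ₀ : β ≤ 0)
    (hmin : ∀ A, C A → ∑ i ∈ A, θ i ≤ 0 → β ≤ ∑ i ∈ A, θ i)
    {A B : Finset V} (hA : C A) (hB : C B)
    (hAβ : ∑ i ∈ A, θ i = β) (hBβ : ∑ i ∈ B, θ i = β) : A = B := by
  have hmod := Finset.sum_union_inter (s₁ := A) (s₂ := B) (f := θ)
  have hinter_le : ∑ i ∈ A ∩ B, θ i ≤ 0 := by
    by_contra! h
    linarith [hmin _ (hunion A B hA hB) (by linarith)]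
  have hinter_ge := hmin _ (hinter A B hA hB) hinter_le
  have hinter_eq : ∑ i ∈ A ∩ B, θ i = β := by
    linarith [hmin _ (hunion A B hA hB) (by linarith)]
  have hsub : ∀ {A B}, C A → ∑ i ∈ A, θ i = β → ∑ i ∈ A ∩ B, θ i = β → A ⊆ B := by
    intro A B hA hAβ hABβ
    by_contra hAB
    have hsdiff : ∑ i ∈ A \ B, θ i = 0 := by
      linarith [Finset.sum_inter_add_sum_sdiff A B θ]
    exact hgen _ (Finset.sdiff_nonempty.2 hAB)
      (ne_top_of_le_ne_top (hne A hA) Finset.sdiff_subset) hsdiff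
  exact (hsub hA hAβ hinter_eq).antisymm (hsub hB hBβ (Finset.inter_comm A B ▸ hinter_eq))

end Sums

theorem exists_destabSub_of_not_stableSub {V E k : Type} [Zero k] {tl hd : E → V}
    {θ : V → ℝ} {x xs : E → k} {W : Finset V} {S : Set E}
    (h : ¬ StableSub tl hd θ x xs W S) : ∃ J, DestabSub tl hd θ x xs W S J := by
  simp only [StableSub, not_forall, not_lt] at h
  obtain ⟨J, hJW, hJS, hJne, hJW', hJθ⟩ := h
  exact ⟨J, hJW, hJne, hJW', hJS, hJθ⟩

section Destabilising

variable {V E k : Type} [Fintype V] [Zero k] {tl hd : E → V} {θ : V → ℝ} {x xs : E → k}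

theorem StableSub.hd_notMem_of_destabSub
    (hstab : StableSub tl hd θ x xs Finset.univ Set.univ) {e : E} {J : Finset V}
    (hJ : DestabSub tl hd θ x xs Finset.univ {f | f ≠ e} J) (htl : tl e ∈ J) :
    hd e ∉ J := fun hhd =>
  (hJ.2.2.2.2.not_gt) <| hstab J hJ.1 (hJ.2.2.2.1.univ_of_mem_iff (iff_of_true htl hhd))
    hJ.2.1 hJ.2.2.1

theorem DestabSub.eq_of_sum_eq_min
    (hstab : StableSub tl hd θ x xs Finset.univ Set.univ) (hgen : Generic θ) {e : E}
    (htl : ∀ J, DestabSub tl hd θ x xs Finset.univ {f | f ≠ e} J → tl e ∈ J) {β : ℝ}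
    (hmin : ∀ J, DestabSub tl hd θ x xs Finset.univ {f | f ≠ e} J → β ≤ ∑ i ∈ J, θ i)
    {A B : Finset V} (hA : DestabSub tl hd θ x xs Finset.univ {f | f ≠ e} A)
    (hB : DestabSub tl hd θ x xs Finset.univ {f | f ≠ e} B)
    (hAβ : ∑ i ∈ A, θ i = β) (hBβ : ∑ i ∈ B, θ i = β) : A = B := by
  have hhd J hJ := hstab.hd_notMem_of_destabSub hJ (htl J hJ)
  have hne_univ {J : Finset V} (hJ : hd e ∉ J) : J ≠ Finset.univ :=
    fun h => hJ (h ▸ Finset.mem_univ _)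
  exact hgen.eq_of_sum_eq_min
    (C := fun J => ClosedOn tl hd x xs {f | f ≠ e} J ∧ tl e ∈ J ∧ hd e ∉ J)
    (fun A B hA hB => ⟨hA.1.union hB.1, Finset.mem_union_left _ hA.2.1,
      by simp [hA.2.2, hB.2.2]⟩)
    (fun A B hA hB => ⟨hA.1.inter hB.1, Finset.mem_inter.2 ⟨hA.2.1, hB.2.1⟩,
      fun h => hA.2.2 (Finset.mem_inter.1 h).1⟩)
    (fun _ hJ => hne_univ hJ.2.2) (hAβ ▸ hA.2.2.2.2)
    (fun J hJ hJθ => hmin J ⟨J.subset_univ, ⟨_, hJ.2.1⟩, hne_univ hJ.2.2, hJ.1, hJθ⟩)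
    ⟨hA.2.2.2.1, htl A hA, hhd A hA⟩ ⟨hB.2.2.2.1, htl B hB, hhd B hB⟩ hAβ hBβ

theorem StableSub.shiftParam_induced
    (hstab : StableSub tl hd θ x xs Finset.univ Set.univ) {e : E} {J₁ : Finset V}
    (hJ₁ : DestabSub tl hd θ x xs Finset.univ {f | f ≠ e} J₁)
    (hmin : ∀ J, DestabSub tl hd θ x xs Finset.univ {f | f ≠ e} J → J ≠ J₁ →
      ∑ i ∈ J₁, θ i < ∑ i ∈ J, θ i)
    (htl : tl e ∈ J₁) (hhd : hd e ∉ J₁) :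
    StableSub tl hd (shiftParam θ (tl e) (hd e) (∑ i ∈ J₁, θ i)) x xs J₁
      {f | tl f ∈ J₁ ∧ hd f ∈ J₁} := by
  intro J hJJ₁ hJcl hJne hJneJ₁
  have hJcl' := hJ₁.2.2.2.1.of_closedOn_induced hJJ₁ hJcl
  have hhdJ : hd e ∉ J := fun h => hhd (hJJ₁ h)
  have hJuniv : J ≠ Finset.univ := fun h => hhdJ (h ▸ Finset.mem_univ _)
  have hne : tl e ≠ hd e := fun h => hhd (h ▸ htl)
  rw [sum_shiftParam θ hne]
  by_cases htlJ : tl e ∈ J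
  · have hlt : ∑ i ∈ J₁, θ i < ∑ i ∈ J, θ i := by
      by_cases hJθ : ∑ i ∈ J, θ i ≤ 0
      · exact hmin J ⟨J.subset_univ, hJne, hJuniv, hJcl', hJθ⟩ hJneJ₁
      · linarith [hJ₁.2.2.2.2]
    simp only [htlJ, hhdJ, if_true, if_false]
    linarith
  · simpa [htlJ, hhdJ] using
      hstab J J.subset_univ (hJcl'.univ_of_mem_iff (iff_of_false htlJ hhdJ)) hJne hJuniv

theorem StableSub.shiftParam_induced_compl
    (hstab : StableSub tl hd θ x xs Finset.univ Set.univ) (hgen : Generic θ)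
    {e : E} {J₁ : Finset V}
    (hJ₁ : DestabSub tl hd θ x xs Finset.univ {f | f ≠ e} J₁)
    (hmin : ∀ J, DestabSub tl hd θ x xs Finset.univ {f | f ≠ e} J →
      ∑ i ∈ J₁, θ i ≤ ∑ i ∈ J, θ i)
    (htl : tl e ∈ J₁) (hhd : hd e ∉ J₁) :
    StableSub tl hd (shiftParam θ (tl e) (hd e) (∑ i ∈ J₁, θ i)) x xs J₁ᶜ
      {f | tl f ∉ J₁ ∧ hd f ∉ J₁} := by
  intro J hJJ₁ hJcl hJne hJneJ₁
  have hdisj : Disjoint J J₁ := Finset.subset_compl_iff_disjoint_right.1 hJJ₁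
  have htlJ : tl e ∉ J := Finset.disjoint_right.1 hdisj htl
  have hJuniv : J ≠ Finset.univ := fun h => htlJ (h ▸ Finset.mem_univ _)
  have hUcl := hJ₁.2.2.2.1.union_of_closedOn_induced_compl hJcl
  have hUne : (J ∪ J₁).Nonempty := hJne.mono Finset.subset_union_left
  have hUuniv : J ∪ J₁ ≠ Finset.univ := by
    obtain ⟨v, hv, hvJ⟩ :=
      Finset.exists_of_ssubset (Finset.ssubset_iff_subset_ne.2 ⟨hJJ₁, hJneJ₁⟩)
    exact fun h => (Finset.mem_union.1 (h ▸ Finset.mem_univ v)).elim hvJ (Finset.mem_compl.1 hv)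
  have hUsum : ∑ i ∈ J ∪ J₁, θ i = ∑ i ∈ J, θ i + ∑ i ∈ J₁, θ i := Finset.sum_union hdisj
  have hne : tl e ≠ hd e := fun h => hhd (h ▸ htl)
  rw [sum_shiftParam θ hne]
  by_cases hhdJ : hd e ∈ J
  · have hU := hstab _ (J ∪ J₁).subset_univ
      (hUcl.univ_of_mem_iff (iff_of_true (Finset.mem_union_right _ htl)
        (Finset.mem_union_left _ hhdJ))) hUne hUuniv
    simp only [htlJ, hhdJ, if_true, if_false]
    linarith
  · simp only [htlJ, hhdJ, if_false, sub_zero, add_zero]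
    by_contra! hJθ
    have hJneg : ∑ i ∈ J, θ i < 0 := hJθ.lt_of_ne (by simpa using hgen J hJne hJuniv)
    linarith [hmin _ ⟨(J ∪ J₁).subset_univ, hUne, hUuniv, hUcl, by linarith [hJ₁.2.2.2.2]⟩]

end Destabilising

theorem statement13_general {V E : Type} [Fintype V] [Fintype E]
    (tl hd : E → V)
    (k : Type) [Field k]
    (θ : V → ℝ) (hgen : Generic θ)
    (x xs : E → k)
    (hstab : StableSub tl hd θ x xs Finset.univ Set.univ)
    (e : E)
    (hunst : ¬ StableSub tl hd θ x xs Finset.univ {f | f ≠ e})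
    (htl : ∀ J, DestabSub tl hd θ x xs Finset.univ {f | f ≠ e} J → tl e ∈ J)
    (β : ℝ)
    (hβ : β = sInf {s : ℝ | ∃ J, DestabSub tl hd θ x xs Finset.univ {f | f ≠ e} J ∧
      ∑ i ∈ J, θ i = s}) :
    (∃! J₁ : Finset V, DestabSub tl hd θ x xs Finset.univ {f | f ≠ e} J₁ ∧
      ∑ i ∈ J₁, θ i = β) ∧
    (∀ J₁ : Finset V, DestabSub tl hd θ x xs Finset.univ {f | f ≠ e} J₁ →
      ∑ i ∈ J₁, θ i = β →
      (∑ i ∈ J₁, (if i = tl e then θ i - β else if i = hd e then θ i + β else θ i)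
          = 0) ∧
      (∀ J : Finset V, J.Nonempty → J ⊆ J₁ → J ≠ J₁ →
        ClosedOn tl hd x xs {f | tl f ∈ J₁ ∧ hd f ∈ J₁} J →
        0 < ∑ i ∈ J,
          (if i = tl e then θ i - β else if i = hd e then θ i + β else θ i)) ∧
      (∀ J : Finset V, J.Nonempty → J ⊆ J₁ᶜ → J ≠ J₁ᶜ →
        ClosedOn tl hd x xs {f | tl f ∉ J₁ ∧ hd f ∉ J₁} J →
        0 < ∑ i ∈ J,
          (if i = tl e then θ i - β else if i = hd e then θ i + β else θ i))) := by
  set D := DestabSub tl hd θ x xs Finset.univ {f | f ≠ e}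
  have hhd : ∀ J, D J → hd e ∉ J := fun J hJ => hstab.hd_notMem_of_destabSub hJ (htl J hJ)
  have hβle : ∀ J, D J → β ≤ ∑ i ∈ J, θ i := fun J hJ => hβ ▸ sInf_le_sum θ hJ
  obtain ⟨J₀, hJ₀, hJ₀β⟩ := exists_sum_eq_sInf θ (exists_destabSub_of_not_stableSub hunst)
  rw [← hβ] at hJ₀β
  have huniq {J₁ J₂} (h₁ : D J₁) (h₂ : D J₂) :
      ∑ i ∈ J₁, θ i = β → ∑ i ∈ J₂, θ i = β → J₁ = J₂ :=
    h₁.eq_of_sum_eq_min hstab hgen htl hβle h₂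
  refine ⟨⟨J₀, ⟨hJ₀, hJ₀β⟩, fun J hJ => huniq hJ.1 hJ₀ hJ.2 hJ₀β⟩, ?_⟩
  intro J₁ hJ₁ hJ₁β
  have hmin : ∀ J, D J → ∑ i ∈ J₁, θ i ≤ ∑ i ∈ J, θ i := hJ₁β ▸ hβle
  have hmin_strict : ∀ J, D J → J ≠ J₁ → ∑ i ∈ J₁, θ i < ∑ i ∈ J, θ i := fun J hJ hne =>
    (hmin J hJ).lt_of_ne fun h => hne (huniq hJ hJ₁ (h ▸ hJ₁β) hJ₁β)
  have hne : tl e ≠ hd e := fun h => hhd J₁ hJ₁ (h ▸ htl J₁ hJ₁)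
  refine ⟨?_, ?_, ?_⟩
  · simpa [shiftParam, htl J₁ hJ₁, hhd J₁ hJ₁, hJ₁β] using sum_shiftParam θ hne β J₁
  · intro J hJne hJsub hJne' hJcl
    simpa [shiftParam, hJ₁β] using hstab.shiftParam_induced hJ₁ hmin_strict
      (htl J₁ hJ₁) (hhd J₁ hJ₁) J hJsub hJcl hJne hJne'
  · intro J hJne hJsub hJne' hJcl
    simpa [shiftParam, hJ₁β] using hstab.shiftParam_induced_compl hgen hJ₁ hmin
      (htl J₁ hJ₁) (hhd J₁ hJ₁) J hJsub hJcl hJne hJne'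

/-- there is a unique destabilising subset `J₁` attaining the minimum `β`;
`Σ_{J₁} θ' = 0` and the restrictions of `(x, xs)` to the full subquivers on `J₁` and on
`V ∖ J₁` are `θ'`-stable. -/
theorem statement13 {V E : Type} [Fintype V] [Nonempty V] [Fintype E]
    (tl hd : E → V) (hQ : IsConn tl hd Set.univ)
    (k : Type) [Field k]
    (θ : V → ℝ) (hgen : Generic θ) (hθ : ∑ i, θ i = 0)
    (x xs : E → k)
    (hstab : StableSub tl hd θ x xs Finset.univ Set.univ)
    (e : E)
    (hunst : ¬ StableSub tl hd θ x xs Finset.univ {f | f ≠ e})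
    (htl : ∀ J, DestabSub tl hd θ x xs Finset.univ {f | f ≠ e} J → tl e ∈ J)
    (β : ℝ)
    (hβ : β = sInf {s : ℝ | ∃ J, DestabSub tl hd θ x xs Finset.univ {f | f ≠ e} J ∧
      ∑ i ∈ J, θ i = s}) :
    (∃! J₁ : Finset V, DestabSub tl hd θ x xs Finset.univ {f | f ≠ e} J₁ ∧
      ∑ i ∈ J₁, θ i = β) ∧
    (∀ J₁ : Finset V, DestabSub tl hd θ x xs Finset.univ {f | f ≠ e} J₁ →
      ∑ i ∈ J₁, θ i = β →
      (∑ i ∈ J₁, (if i = tl e then θ i - β else if i = hd e then θ i + β else θ i)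
          = 0) ∧
      (∀ J : Finset V, J.Nonempty → J ⊆ J₁ → J ≠ J₁ →
        ClosedOn tl hd x xs {f | tl f ∈ J₁ ∧ hd f ∈ J₁} J →
        0 < ∑ i ∈ J,
          (if i = tl e then θ i - β else if i = hd e then θ i + β else θ i)) ∧
      (∀ J : Finset V, J.Nonempty → J ⊆ J₁ᶜ → J ≠ J₁ᶜ →
        ClosedOn tl hd x xs {f | tl f ∉ J₁ ∧ hd f ∉ J₁} J →
        0 < ∑ i ∈ J,
          (if i = tl e then θ i - β else if i = hd e then θ i + β else θ i))) :=
  statement13_general tl hd k θ hgen x xs hstab e hunst htl β hβ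

end
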